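/- Let n ≥ 1 and let f : ℝⁿ → ℝ be continuously differentiable with gradient g. Fix s ∈ (0,1], ρ ∈ (0,1), σ ∈ (0,1/2), an integer N ≥ 1, and weights η_k ∈ [0,1). Let x_{k+1} = x_k + α_k d_k, where α_k = s ρ^{j_k} and j_k is the smallest j ∈ ℕ with f(x_k + s ρ^j d_k) ≤ T_k + σ s ρ^j ⟨g(x_k), d_k⟩; here f_k = f(x_k), f_{l(k)} = max_{0≤j≤min(k,N)} f_{k−j}, T̄_0 = f_0, T̄_k = (1−η_{k−1}) f_k + η_{k−1} T̄_{k−1} for 1 ≤ k ≤ N−1, T̄_k = Σ_{j=0}^{N−1}(η_{k−1}⋯η_{k−j})(1−η_{k−j−1}) f_{k−j} + (η_{k−1}⋯η_{k−N}) f_{k−N} for k ≥ N, and T_k = f_{l(k)} for k ≤ N−1, T_k = max{T̄_k, f_k} for k ≥ N. Assume (H1) the level set L(x_0) = {x ∈ ℝⁿ : f(x) ≤ f(x_0)} is bounded; (H2) there exist an open convex set C ⊇ L(x_0) and L > 0 with ‖g(x) − g(y)‖ ≤ L‖x − y‖ for all x, y ∈ C; and (H3) there exist 0 < c₁ < 1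 < c₂ with ⟨g(x_k), d_k⟩ ≤ −c₁‖g(x_k)‖² and ‖d_k‖ ≤ c₂‖g(x_k)‖ for all k. Then the limits lim_{k→∞} T_k and lim_{k→∞} f(x_k) both exist and are equal. -/

import Mathlib

/-!
Along the iterates, `f x_{k+1} ≤ f_{l(k)} - β ‖x_{k+1} - x_k‖²` for some `β > 0`: the Armijo
test is made against `T_k ≤ f_{l(k)}` (as `T̄_k` is a convex combination of the last `N + 1`
values), and (H3) turns `σ α_k ⟨g_k, d_k⟩` into a negative multiple of the squared step.
Hence `f_{l(k)}` is nonincreasing and, being bounded below on the compact level set, converges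
to some `l`. At an index `m` attaining `f_{l(k)}`, the decrease inequality at `m - 1` forces the
step into `x_m` to vanish, so by uniform continuity `f x_{m-1} → l` as well; repeating this `N`
times, all steps within `N` of `m` vanish. Every `k + 1` lies within `N` steps before such a
maximiser for `f_{l(k+N+1)}`, so `f x_k → l`, and `f x_k ≤ T_k ≤ f_{l(k)}` squeezes `T_k`.
-/

open Filter Finset Topology

/-- The paper's `f_{l(k)}` when `u = f ∘ x`. -/
noncomputable def windowMax (u : ℕ → ℝ) (N k : ℕ) : ℝ :=
  (range (min k N + 1)).sup' nonempty_range_add_one fun j => u (k - j)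

section windowMax

variable (u : ℕ → ℝ) (N : ℕ)

theorem le_windowMax {k j : ℕ} (hj : j ≤ min k N) : u (k - j) ≤ windowMax u N k :=
  le_sup' (fun j => u (k - j)) (mem_range.2 (Nat.lt_succ_of_le hj))

theorem le_windowMax_self (k : ℕ) : u k ≤ windowMax u N k :=
  le_windowMax u N (Nat.zero_le _)

theorem windowMax_zero : windowMax u N 0 = u 0 := by
  simp [windowMax]

theorem exists_eq_windowMax (k : ℕ) : ∃ m ≤ k, k ≤ m + N ∧ u m = windowMax u N k := by
  obtain ⟨j, hj, h⟩ := exists_mem_eq_sup' nonempty_range_add_one fun j => u (k - j)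
  have := mem_range.1 hj
  exact ⟨k - j, Nat.sub_le _ _, by omega, h.symm⟩

theorem windowMax_succ_le {k : ℕ} (h : u (k + 1) ≤ windowMax u N k) :
    windowMax u N (k + 1) ≤ windowMax u N k := by
  refine sup'_le _ _ fun j hj => ?_
  rcases j with _ | j
  · simpa using h
  · have := mem_range.1 hj
    simpa using le_windowMax u N (k := k) (j := j) (by omega)

theorem antitone_windowMax (h : ∀ k, u (k + 1) ≤ windowMax u N k) : Antitone (windowMax u N) :=
  antitone_nat_of_succ_le fun k => windowMax_succ_le u N (h k)

theorem tendsto_windowMax_ciInf (h : ∀ k, u (k + 1) ≤ windowMax u N k)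
    (hbdd : BddBelow (Set.range u)) :
    Tendsto (windowMax u N) atTop (𝓝 (⨅ k, windowMax u N k)) := by
  obtain ⟨b, hb⟩ := hbdd
  refine tendsto_atTop_ciInf (antitone_windowMax u N h) ⟨b, ?_⟩
  rintro _ ⟨k, rfl⟩
  exact (hb ⟨k, rfl⟩).trans (le_windowMax_self u N k)

end windowMax

theorem sum_prod_mul_one_sub_add_prod (w : ℕ → ℝ) (N : ℕ) :
    ∑ j ∈ range N, (∏ i ∈ range j, w i) * (1 - w j) + ∏ i ∈ range N, w i = 1 := by
  induction N with
  | zero => simp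
  | succ N ih =>
    rw [sum_range_succ, prod_range_succ]
    linear_combination ih

theorem sum_prod_mul_one_sub_mul_add_prod_mul_le {w v : ℕ → ℝ} {N : ℕ} {M : ℝ}
    (hw : ∀ i, w i ∈ Set.Icc (0 : ℝ) 1) (hv : ∀ j ≤ N, v j ≤ M) :
    ∑ j ∈ range N, (∏ i ∈ range j, w i) * (1 - w j) * v j + (∏ i ∈ range N, w i) * v N ≤ M := by
  have hprod : ∀ j, 0 ≤ ∏ i ∈ range j, w i := fun j => prod_nonneg fun i _ => (hw i).1
  calc _ ≤ ∑ j ∈ range N, (∏ i ∈ range j, w i) * (1 - w j) * M + (∏ i ∈ range N, w i) * M := by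
        gcongr with j hj
        · exact mul_nonneg (hprod j) (sub_nonneg.2 (hw j).2)
        · exact hv j (mem_range.1 hj).le
        · exact hprod N
        · exact hv N le_rfl
    _ = M := by rw [← sum_mul, ← add_mul, sum_prod_mul_one_sub_add_prod, one_mul]

theorem weighted_sum_le_windowMax (u : ℕ → ℝ) {η : ℕ → ℝ} (hη : ∀ i, η i ∈ Set.Icc (0 : ℝ) 1)
    {N k : ℕ} (hk : N ≤ k) :
    ∑ j ∈ range N, (∏ i ∈ range j, η (k - 1 - i)) * (1 - η (k - j - 1)) * u (k - j)
      + (∏ i ∈ range N, η (k - 1 - i)) * u (k - N) ≤ windowMax u N k := by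
  simp_rw [Nat.sub_right_comm k _ 1]
  exact sum_prod_mul_one_sub_mul_add_prod_mul_le (fun i => hη _)
    fun j hj => le_windowMax u N (by omega)

theorem le_sub_mul_norm_smul_sq_of_le_add_inner {E : Type*} [NormedAddCommGroup E]
    [InnerProductSpace ℝ E] {g d : E} {y T σ α s c₁ c₂ : ℝ} (hσ : 0 ≤ σ) (hα : 0 < α)
    (hαs : α ≤ s) (hc₁ : 0 ≤ c₁) (hc₂ : 0 < c₂) (hgd : inner ℝ g d ≤ -c₁ * ‖g‖ ^ 2)
    (hd : ‖d‖ ≤ c₂ * ‖g‖) (hy : y ≤ T + σ * α * inner ℝ g d) :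
    y ≤ T - σ * c₁ / (s * c₂ ^ 2) * ‖α • d‖ ^ 2 := by
  have hs : 0 < s := hα.trans_le hαs
  have hstep : ‖α • d‖ ≤ α * c₂ * ‖g‖ := by
    rw [norm_smul, Real.norm_of_nonneg hα.le, mul_assoc]
    exact mul_le_mul_of_nonneg_left hd hα.le
  have hquad : σ * c₁ / (s * c₂ ^ 2) * ‖α • d‖ ^ 2 ≤ σ * c₁ * α * ‖g‖ ^ 2 :=
    calc _ ≤ σ * c₁ / (s * c₂ ^ 2) * (α * c₂ * ‖g‖) ^ 2 := by gcongr
      _ = σ * c₁ * α * ‖g‖ ^ 2 * (α / s) := by field_simp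
      _ ≤ σ * c₁ * α * ‖g‖ ^ 2 :=
        mul_le_of_le_one_right (by positivity) ((div_le_one hs).2 hαs)
  nlinarith [mul_le_mul_of_nonneg_left hgd (mul_nonneg hσ hα.le)]

theorem UniformContinuousOn.tendsto_comp_of_tendsto_dist {X ι : Type*} [PseudoMetricSpace X]
    {φ : X → ℝ} {S : Set X} (hφ : UniformContinuousOn φ S) {p : Filter ι} {a b : ι → X}
    (ha : ∀ k, a k ∈ S) (hb : ∀ k, b k ∈ S) (hab : Tendsto (fun k => dist (b k) (a k)) p (𝓝 0))
    {l : ℝ} (hl : Tendsto (φ ∘ b) p (𝓝 l)) : Tendsto (φ ∘ a) p (𝓝 l) :=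
  hl.congr_uniformity <| Tendsto.comp hφ <| tendsto_inf.2
    ⟨tendsto_uniformity_iff_dist_tendsto_zero (f := fun k => (b k, a k)) |>.2 hab,
      tendsto_principal.2 <| Eventually.of_forall fun k => Set.mk_mem_prod (hb k) (ha k)⟩

section Decrease

variable {X : Type*} [PseudoMetricSpace X] {φ : X → ℝ} {x : ℕ → X} {N : ℕ} {β : ℝ}
  (hβ : 0 < β)
  (hdec : ∀ k, φ (x (k + 1)) ≤ windowMax (φ ∘ x) N k - β * dist (x (k + 1)) (x k) ^ 2)
include hβ hdec

theorem apply_succ_le_windowMax_of_decrease (k : ℕ) :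
    (φ ∘ x) (k + 1) ≤ windowMax (φ ∘ x) N k :=
  (hdec k).trans (sub_le_self _ (by positivity))

theorem apply_le_apply_zero_of_decrease (k : ℕ) : φ (x k) ≤ φ (x 0) :=
  calc φ (x k) ≤ windowMax (φ ∘ x) N k := le_windowMax_self (φ ∘ x) N k
    _ ≤ windowMax (φ ∘ x) N 0 :=
      antitone_windowMax _ N (apply_succ_le_windowMax_of_decrease hβ hdec) (Nat.zero_le k)
    _ = φ (x 0) := windowMax_zero _ N

theorem tendsto_dist_succ_of_decrease {l : ℝ}
    (hM : Tendsto (windowMax (φ ∘ x) N) atTop (𝓝 l)) {τ : ℕ → ℕ}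
    (hτ : Tendsto τ atTop atTop) (hu : Tendsto (fun k => φ (x (τ k + 1))) atTop (𝓝 l)) :
    Tendsto (fun k => dist (x (τ k + 1)) (x (τ k))) atTop (𝓝 0) := by
  have hgap : Tendsto (fun k => (windowMax (φ ∘ x) N (τ k) - φ (x (τ k + 1))) / β) atTop
      (𝓝 0) := by
    simpa using ((hM.comp hτ).sub hu).div_const β
  have hsq : Tendsto (fun k => dist (x (τ k + 1)) (x (τ k)) ^ 2) atTop (𝓝 0) := by
    refine squeeze_zero (fun k => by positivity) (fun k => ?_) hgap
    rw [le_div_iff₀ hβ]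
    linarith [hdec (τ k)]
  simpa using hsq.sqrt

theorem tendsto_dist_sub_of_eq_windowMax {S : Set X} (hφ : UniformContinuousOn φ S)
    (hxS : ∀ k, x k ∈ S) {l : ℝ} (hM : Tendsto (windowMax (φ ∘ x) N) atTop (𝓝 l))
    {L : ℕ → ℕ} (hL : ∀ k, (φ ∘ x) (L k) = windowMax (φ ∘ x) N k)
    (hLtop : Tendsto L atTop atTop) (j : ℕ) :
    Tendsto (fun k => dist (x (L k - j)) (x (L k))) atTop (𝓝 0) := by
  induction j with
  | zero => simp
  | succ j ih =>
    have hu : Tendsto (fun k => φ (x (L k - j))) atTop (𝓝 l) :=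
      hφ.tendsto_comp_of_tendsto_dist (fun k => hxS _) (fun k => hxS _)
        (by simpa only [dist_comm] using ih) (hM.congr fun k => (hL k).symm)
    have hsucc : ∀ᶠ k in atTop, L k - (j + 1) + 1 = L k - j :=
      (hLtop.eventually_ge_atTop (j + 1)).mono fun k hk => by omega
    have hstep := tendsto_dist_succ_of_decrease hβ hdec hM
      ((tendsto_sub_atTop_nat (j + 1)).comp hLtop)
      (hu.congr' (hsucc.mono fun k hk => by simp only [Function.comp_apply, hk]))
    refine squeeze_zero' (Eventually.of_forall fun k => dist_nonneg) ?_
      (by simpa using hstep.add ih)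
    filter_upwards [hsucc] with k hk
    calc dist (x (L k - (j + 1))) (x (L k))
        ≤ dist (x (L k - (j + 1))) (x (L k - j)) + dist (x (L k - j)) (x (L k)) :=
          dist_triangle _ _ _
      _ = _ := by rw [← hk, dist_comm (x (L k - (j + 1)))]

theorem exists_tendsto_windowMax_and_tendsto_of_decrease
    (hφ : UniformContinuousOn φ {y | φ y ≤ φ (x 0)}) (hbdd : BddBelow (φ '' {y | φ y ≤ φ (x 0)})) :
    ∃ l, Tendsto (windowMax (φ ∘ x) N) atTop (𝓝 l) ∧ Tendsto (φ ∘ x) atTop (𝓝 l) := by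
  have hxS := apply_le_apply_zero_of_decrease hβ hdec
  have hM := tendsto_windowMax_ciInf _ N (apply_succ_le_windowMax_of_decrease hβ hdec)
    (hbdd.mono (Set.range_subset_iff.2 fun k => Set.mem_image_of_mem φ (hxS k)))
  refine ⟨_, hM, ?_⟩
  choose L hLle hLge hL using exists_eq_windowMax (φ ∘ x) N
  have hLtop : Tendsto L atTop atTop :=
    tendsto_atTop_atTop.2 fun b => ⟨b + N, fun k hk => by linarith [hLge k]⟩
  have hshift := tendsto_add_atTop_nat (N + 1)
  -- `x (k + 1)` lies at most `N` steps before the maximiser `L (k + (N + 1))`.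
  have hclose : Tendsto (fun k => dist (x (L (k + (N + 1)))) (x (k + 1))) atTop (𝓝 0) := by
    have hsum := tendsto_finsetSum (range (N + 1)) fun j _ =>
      (tendsto_dist_sub_of_eq_windowMax hβ hdec hφ hxS hM hL hLtop j).comp hshift
    refine squeeze_zero (fun _ => dist_nonneg) (fun k => ?_) (by simpa using hsum)
    have hj : L (k + (N + 1)) - (L (k + (N + 1)) - (k + 1)) = k + 1 := by
      have := hLle (k + (N + 1)); have := hLge (k + (N + 1)); omega
    calc dist (x (L (k + (N + 1)))) (x (k + 1))
        = dist (x (L (k + (N + 1)) - (L (k + (N + 1)) - (k + 1)))) (x (L (k + (N + 1)))) := by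
          rw [hj, dist_comm]
      _ ≤ ∑ j ∈ range (N + 1), dist (x (L (k + (N + 1)) - j)) (x (L (k + (N + 1)))) :=
          single_le_sum (f := fun j => dist (x (L (k + (N + 1)) - j)) (x (L (k + (N + 1)))))
            (fun j _ => dist_nonneg) (mem_range.2 (by have := hLle (k + (N + 1)); omega))
  exact (tendsto_add_atTop_iff_nat 1).1 <|
    hφ.tendsto_comp_of_tendsto_dist (fun k => hxS _) (fun k => hxS _) hclose
      ((hM.comp hshift).congr fun k => (hL _).symm)

end Decrease

theorem nmls_Tk_and_fk_common_limit_general (n : ℕ)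
    (f : EuclideanSpace ℝ (Fin n) → ℝ)
    (g : EuclideanSpace ℝ (Fin n) → EuclideanSpace ℝ (Fin n))
    (hf : ContDiff ℝ 1 f)
    (s ρ σ : ℝ) (hs : s ∈ Set.Ioc (0 : ℝ) 1) (hρ : ρ ∈ Set.Ioo (0 : ℝ) 1)
    (hσ : σ ∈ Set.Ioo (0 : ℝ) (1 / 2))
    (N : ℕ) (η : ℕ → ℝ) (hη : ∀ k, η k ∈ Set.Ico (0 : ℝ) 1)
    (x d : ℕ → EuclideanSpace ℝ (Fin n)) (α : ℕ → ℝ) (jk : ℕ → ℕ)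
    (Tbar T fl : ℕ → ℝ)
    (hfl : ∀ k, fl k = (Finset.range (min k N + 1)).sup'
      Finset.nonempty_range_add_one (fun j => f (x (k - j))))
    (hTsum : ∀ k, N ≤ k → Tbar k =
      (∑ j ∈ Finset.range N,
          (∏ i ∈ Finset.range j, η (k - 1 - i)) * (1 - η (k - j - 1)) * f (x (k - j)))
        + (∏ i ∈ Finset.range N, η (k - 1 - i)) * f (x (k - N)))
    (hTlt : ∀ k, k ≤ N - 1 → T k = fl k)
    (hTge : ∀ k, N ≤ k → T k = max (Tbar k) (f (x k)))
    (hjk : ∀ k, IsLeast {j : ℕ | f (x k + (s * ρ ^ j) • d k) ≤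
      T k + σ * (s * ρ ^ j) * (inner ℝ (g (x k)) (d k) : ℝ)} (jk k))
    (hα : ∀ k, α k = s * ρ ^ (jk k))
    (hx : ∀ k, x (k + 1) = x k + α k • d k)
    (H1 : Bornology.IsBounded {y : EuclideanSpace ℝ (Fin n) | f y ≤ f (x 0)})
    (H3 : ∃ c₁ c₂ : ℝ, 0 < c₁ ∧ c₁ < 1 ∧ 1 < c₂ ∧
      ∀ k, (inner ℝ (g (x k)) (d k) : ℝ) ≤ -c₁ * ‖g (x k)‖ ^ 2 ∧
        ‖d k‖ ≤ c₂ * ‖g (x k)‖) :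
    ∃ l : ℝ, Filter.Tendsto T Filter.atTop (nhds l) ∧
      Filter.Tendsto (fun k => f (x k)) Filter.atTop (nhds l) := by
  obtain ⟨c₁, c₂, hc₁, -, hc₂, hdir⟩ := H3
  have hfl' : fl = windowMax (f ∘ x) N := funext hfl
  have hTM : ∀ k, T k ≤ windowMax (f ∘ x) N k := by
    intro k
    rcases le_or_gt N k with hk | hk
    · rw [hTge k hk, hTsum k hk]
      exact max_le
        (weighted_sum_le_windowMax (f ∘ x) (fun i => Set.Ico_subset_Icc_self (hη i)) hk)
        (le_windowMax_self (f ∘ x) N k)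
    · rw [hTlt k (by omega), hfl']
  have hFT : ∀ k, f (x k) ≤ T k := by
    intro k
    rcases le_or_gt N k with hk | hk
    · rw [hTge k hk]; exact le_max_right _ _
    · rw [hTlt k (by omega), hfl']; exact le_windowMax_self (f ∘ x) N k
  have hdec : ∀ k, f (x (k + 1)) ≤
      windowMax (f ∘ x) N k - σ * c₁ / (s * c₂ ^ 2) * dist (x (k + 1)) (x k) ^ 2 := by
    intro k
    have hαk : 0 < α k ∧ α k ≤ s := by
      rw [hα]
      exact ⟨by have := hs.1; have := hρ.1; positivity,
        mul_le_of_le_one_right hs.1.le (pow_le_one₀ hρ.1.le hρ.2.le)⟩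
    have harm := (hjk k).1
    rw [Set.mem_ofPred_eq, ← hα, ← hx] at harm
    have := le_sub_mul_norm_smul_sq_of_le_add_inner hσ.1.le hαk.1 hαk.2 hc₁.le
      (by linarith) (hdir k).1 (hdir k).2 harm
    have hstep : dist (x (k + 1)) (x k) = ‖α k • d k‖ := by
      rw [dist_eq_norm, hx k, add_sub_cancel_left]
    rw [hstep]
    linarith [hTM k]
  have hK : IsCompact {y | f y ≤ f (x 0)} :=
    Metric.isCompact_of_isClosed_isBounded (isClosed_le hf.continuous continuous_const) H1
  obtain ⟨l, hMl, hFl⟩ := exists_tendsto_windowMax_and_tendsto_of_decrease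
    (by have := hσ.1; have := hs.1; positivity) hdec
    (hK.uniformContinuousOn_of_continuous hf.continuous.continuousOn)
    (hK.bddBelow_image hf.continuous.continuousOn)
  exact ⟨l, tendsto_of_tendsto_of_tendsto_of_le_of_le hFl hMl hFT hTM, hFl⟩

/-- Lemma 2: for Algorithm NMLS with the nonmonotone term (11), under (H1)–(H3),
the sequence of nonmonotone reference values `T_k` and the sequence of function
values `f(x_k)` converge to a common limit. -/
theorem nmls_Tk_and_fk_common_limit (n : ℕ) (hn : 1 ≤ n)
    (f : EuclideanSpace ℝ (Fin n) → ℝ)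
    (g : EuclideanSpace ℝ (Fin n) → EuclideanSpace ℝ (Fin n))
    (hf : ContDiff ℝ 1 f) (hg : ∀ y, HasGradientAt f (g y) y)
    (s ρ σ : ℝ) (hs : s ∈ Set.Ioc (0 : ℝ) 1) (hρ : ρ ∈ Set.Ioo (0 : ℝ) 1)
    (hσ : σ ∈ Set.Ioo (0 : ℝ) (1 / 2))
    (N : ℕ) (hN : 1 ≤ N) (η : ℕ → ℝ) (hη : ∀ k, η k ∈ Set.Ico (0 : ℝ) 1)
    (x d : ℕ → EuclideanSpace ℝ (Fin n)) (α : ℕ → ℝ) (jk : ℕ → ℕ)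
    (Tbar T fl : ℕ → ℝ)
    (hfl : ∀ k, fl k = (Finset.range (min k N + 1)).sup'
      Finset.nonempty_range_add_one (fun j => f (x (k - j))))
    (hT0 : Tbar 0 = f (x 0))
    (hTrec : ∀ k, 1 ≤ k → k ≤ N - 1 →
      Tbar k = (1 - η (k - 1)) * f (x k) + η (k - 1) * Tbar (k - 1))
    (hTsum : ∀ k, N ≤ k → Tbar k =
      (∑ j ∈ Finset.range N,
          (∏ i ∈ Finset.range j, η (k - 1 - i)) * (1 - η (k - j - 1)) * f (x (k - j)))
        + (∏ i ∈ Finset.range N, η (k - 1 - i)) * f (x (k - N)))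
    (hTlt : ∀ k, k ≤ N - 1 → T k = fl k)
    (hTge : ∀ k, N ≤ k → T k = max (Tbar k) (f (x k)))
    (hjk : ∀ k, IsLeast {j : ℕ | f (x k + (s * ρ ^ j) • d k) ≤
      T k + σ * (s * ρ ^ j) * (inner ℝ (g (x k)) (d k) : ℝ)} (jk k))
    (hα : ∀ k, α k = s * ρ ^ (jk k))
    (hx : ∀ k, x (k + 1) = x k + α k • d k)
    (H1 : Bornology.IsBounded {y : EuclideanSpace ℝ (Fin n) | f y ≤ f (x 0)})
    (H2 : ∃ C : Set (EuclideanSpace ℝ (Fin n)), IsOpen C ∧ Convex ℝ C ∧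
      {y : EuclideanSpace ℝ (Fin n) | f y ≤ f (x 0)} ⊆ C ∧
      ∃ L > (0 : ℝ), ∀ a ∈ C, ∀ b ∈ C, ‖g a - g b‖ ≤ L * ‖a - b‖)
    (H3 : ∃ c₁ c₂ : ℝ, 0 < c₁ ∧ c₁ < 1 ∧ 1 < c₂ ∧
      ∀ k, (inner ℝ (g (x k)) (d k) : ℝ) ≤ -c₁ * ‖g (x k)‖ ^ 2 ∧
        ‖d k‖ ≤ c₂ * ‖g (x k)‖) :
    ∃ l : ℝ, Filter.Tendsto T Filter.atTop (nhds l) ∧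
      Filter.Tendsto (fun k => f (x k)) Filter.atTop (nhds l) :=
  nmls_Tk_and_fk_common_limit_general n f g hf s ρ σ hs hρ hσ N η hη x d α jk Tbar T fl hfl hTsum
    hTlt hTge hjk hα hx H1 H3
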